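/- Stability of sparse solutions under low coherence (noisy case, restricted version): let Q have unit-norm columns with coherence M, and suppose s* has support of size K with (4K−1)M < 1. If θ̂ satisfies ‖θ̂ − Q s*‖₂ ≤ ε and s⁺ has ‖s⁺‖₀ ≤ K with ‖θ̂ − Q s⁺‖₂ ≤ ε, then ‖s* − s⁺‖₂² ≤ 4ε² / (1 − M(2K−1)). -/

import Mathlib

/-! The difference `v = s* − s⁺` is `2K`-sparse and `‖Q v‖ ≤ 2ε`. In the Gram expansion of
`‖Q v‖²` the diagonal contributes `‖v‖²` and each off-diagonal term is at least
`−M |v_j| |v_l|`, so `‖Q v‖² ≥ (1 + M) ‖v‖² − M ‖v‖₁²`; Cauchy–Schwarz on the support gives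
`‖v‖₁² ≤ 2K ‖v‖²`, hence `‖Q v‖² ≥ (1 − M (2K − 1)) ‖v‖²`. -/

open scoped RealInnerProductSpace

noncomputable def matCol {d k : ℕ} (Q : Matrix (Fin d) (Fin k) ℝ) (j : Fin k) :
    EuclideanSpace ℝ (Fin d) := WithLp.toLp 2 (fun i => Q i j)

noncomputable def mutualCoherenceU {d k : ℕ} (Q : Matrix (Fin d) (Fin k) ℝ) : ℝ :=
  sSup {x : ℝ | ∃ i j : Fin k, i ≠ j ∧ x = |⟪matCol Q i, matCol Q j⟫|}

noncomputable def l0norm {k : ℕ} (v : Fin k → ℝ) : ℕ :=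
  (Finset.univ.filter fun j => v j ≠ 0).card

section GramBound

variable {ι E : Type*} [Fintype ι] [NormedAddCommGroup E] [InnerProductSpace ℝ E]

theorem norm_sum_smul_sq_eq_sum_sum_inner (u : ι → E) (v : ι → ℝ) :
    ‖∑ j, v j • u j‖ ^ 2 = ∑ j, ∑ l, v j * v l * ⟪u j, u l⟫ := by
  rw [← real_inner_self_eq_norm_sq, sum_inner]
  refine Finset.sum_congr rfl fun j _ => ?_
  rw [inner_sum]
  refine Finset.sum_congr rfl fun l _ => ?_
  rw [real_inner_smul_left, real_inner_smul_right]
  ring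

theorem add_mul_sum_sq_sub_mul_sq_sum_abs_le_norm_sum_smul_sq {u : ι → E} {M : ℝ}
    (hu : ∀ i, ‖u i‖ = 1) (hM : ∀ i j, i ≠ j → |⟪u i, u j⟫| ≤ M) (v : ι → ℝ) :
    (1 + M) * ∑ j, v j ^ 2 - M * (∑ j, |v j|) ^ 2 ≤ ‖∑ j, v j • u j‖ ^ 2 := by
  classical
  have hterm : ∀ j l, (1 + M) * (if j = l then v j ^ 2 else 0) - M * (|v j| * |v l|)
      ≤ v j * v l * ⟪u j, u l⟫ := by
    intro j l
    by_cases hjl : j = l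
    · subst hjl
      rw [if_pos rfl, real_inner_self_eq_norm_sq, hu, abs_mul_abs_self]
      linarith
    · rw [if_neg hjl, mul_zero, zero_sub, neg_le]
      calc -(v j * v l * ⟪u j, u l⟫) ≤ |v j * v l * ⟪u j, u l⟫| := neg_le_abs _
        _ ≤ |v j| * |v l| * M := by
          rw [abs_mul, abs_mul]
          exact mul_le_mul_of_nonneg_left (hM j l hjl) (by positivity)
        _ = M * (|v j| * |v l|) := mul_comm _ _
  calc (1 + M) * ∑ j, v j ^ 2 - M * (∑ j, |v j|) ^ 2
      = ∑ j, ∑ l, ((1 + M) * (if j = l then v j ^ 2 else 0) - M * (|v j| * |v l|)) := by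
        simp only [Finset.sum_sub_distrib, ← Finset.mul_sum, Finset.sum_ite_eq,
          Finset.mem_univ, if_true, sq, Finset.sum_mul_sum]
    _ ≤ ∑ j, ∑ l, v j * v l * ⟪u j, u l⟫ :=
        Finset.sum_le_sum fun j _ => Finset.sum_le_sum fun l _ => hterm j l
    _ = ‖∑ j, v j • u j‖ ^ 2 := (norm_sum_smul_sq_eq_sum_sum_inner u v).symm

end GramBound

section Coherence

variable {d k : ℕ}

theorem abs_inner_matCol_le_mutualCoherenceU (Q : Matrix (Fin d) (Fin k) ℝ) {i j : Fin k}
    (hij : i ≠ j) : |⟪matCol Q i, matCol Q j⟫| ≤ mutualCoherenceU Q := by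
  refine le_csSup ?_ ⟨i, j, hij, rfl⟩
  refine (Set.finite_range fun p : Fin k × Fin k => |⟪matCol Q p.1, matCol Q p.2⟫|)
    |>.subset ?_ |>.bddAbove
  rintro x ⟨i, j, -, rfl⟩
  exact ⟨(i, j), rfl⟩

theorem mutualCoherenceU_nonneg (Q : Matrix (Fin d) (Fin k) ℝ) : 0 ≤ mutualCoherenceU Q :=
  Real.sSup_nonneg fun _ ⟨_, _, _, hx⟩ => hx ▸ abs_nonneg _

theorem l0norm_sub_le (a b : Fin k → ℝ) : l0norm (a - b) ≤ l0norm a + l0norm b := by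
  refine (Finset.card_le_card fun j hj => ?_).trans (Finset.card_union_le _ _)
  simp only [Finset.mem_filter, Finset.mem_univ, true_and, Finset.mem_union, Pi.sub_apply] at hj ⊢
  by_contra! h
  exact hj (by rw [h.1, h.2, sub_zero])

theorem sq_sum_abs_le_l0norm_mul_sum_sq (v : Fin k → ℝ) :
    (∑ j, |v j|) ^ 2 ≤ l0norm v * ∑ j, v j ^ 2 := by
  set S := Finset.univ.filter fun j => v j ≠ 0
  have hsupp : ∑ j, |v j| = ∑ j ∈ S, |v j| :=
    (Finset.sum_filter_ne_zero _).symm.trans (by simp [S])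
  calc (∑ j, |v j|) ^ 2 = (∑ j ∈ S, |v j|) ^ 2 := by rw [hsupp]
    _ ≤ S.card * ∑ j ∈ S, |v j| ^ 2 := sq_sum_le_card_mul_sum_sq
    _ ≤ l0norm v * ∑ j, v j ^ 2 := by
      simp only [sq_abs]
      exact mul_le_mul_of_nonneg_left (Finset.sum_le_sum_of_subset_of_nonneg
        (Finset.subset_univ S) fun j _ _ => sq_nonneg _) (Nat.cast_nonneg _)

theorem sum_sq_mulVec_eq_norm_sum_smul_matCol_sq (Q : Matrix (Fin d) (Fin k) ℝ)
    (v : Fin k → ℝ) : ∑ i, Q.mulVec v i ^ 2 = ‖∑ j, v j • matCol Q j‖ ^ 2 := by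
  rw [EuclideanSpace.real_norm_sq_eq]
  refine Finset.sum_congr rfl fun i _ => ?_
  simp [matCol, Matrix.mulVec, dotProduct, mul_comm]

theorem one_sub_mutualCoherenceU_mul_sum_sq_le_sum_sq_mulVec (Q : Matrix (Fin d) (Fin k) ℝ)
    (hunit : ∀ j, ‖matCol Q j‖ = 1) {s : ℕ} {v : Fin k → ℝ} (hv : l0norm v ≤ s) :
    (1 - mutualCoherenceU Q * (s - 1)) * ∑ j, v j ^ 2 ≤ ∑ i, Q.mulVec v i ^ 2 := by
  set M := mutualCoherenceU Q
  have hgram := add_mul_sum_sq_sub_mul_sq_sum_abs_le_norm_sum_smul_sq hunit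
    (fun _ _ => abs_inner_matCol_le_mutualCoherenceU Q) v
  have hsparse : M * (∑ j, |v j|) ^ 2 ≤ M * (s * ∑ j, v j ^ 2) :=
    mul_le_mul_of_nonneg_left ((sq_sum_abs_le_l0norm_mul_sum_sq v).trans <|
      mul_le_mul_of_nonneg_right (by exact_mod_cast hv) (by positivity))
      (mutualCoherenceU_nonneg Q)
  rw [sum_sq_mulVec_eq_norm_sum_smul_matCol_sq]
  linarith

end Coherence

theorem sparse_stability_general {d k K : ℕ} (Q : Matrix (Fin d) (Fin k) ℝ)
    (hunit : ∀ j, ‖matCol Q j‖ = 1)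
    (sStar sPlus : Fin k → ℝ) (θhat : Fin d → ℝ) (ε : ℝ)
    (hKcond : (4 * (K : ℝ) - 1) * mutualCoherenceU Q < 1)
    (hsStar : l0norm sStar ≤ K) (hsPlus : l0norm sPlus ≤ K)
    (hfit1 : ∑ i, (θhat i - Q.mulVec sStar i) ^ 2 ≤ ε ^ 2)
    (hfit2 : ∑ i, (θhat i - Q.mulVec sPlus i) ^ 2 ≤ ε ^ 2) :
    ∑ j, (sStar j - sPlus j) ^ 2 ≤
      4 * ε ^ 2 / (1 - mutualCoherenceU Q * (2 * (K : ℝ) - 1)) := by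
  have hsparse : l0norm (sStar - sPlus) ≤ 2 * K := by
    linarith [l0norm_sub_le sStar sPlus]
  have hlower := one_sub_mutualCoherenceU_mul_sum_sq_le_sum_sq_mulVec Q hunit hsparse
  have hupper : ∑ i, Q.mulVec (sStar - sPlus) i ^ 2 ≤ 4 * ε ^ 2 := by
    calc ∑ i, Q.mulVec (sStar - sPlus) i ^ 2
        = ∑ i, ((θhat i - Q.mulVec sPlus i) + -(θhat i - Q.mulVec sStar i)) ^ 2 := by
          refine Finset.sum_congr rfl fun i _ => ?_
          rw [Matrix.mulVec_sub, Pi.sub_apply]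
          ring
      _ ≤ ∑ i, 2 * ((θhat i - Q.mulVec sPlus i) ^ 2 + (θhat i - Q.mulVec sStar i) ^ 2) :=
          Finset.sum_le_sum fun i _ => neg_sq (θhat i - Q.mulVec sStar i) ▸ add_sq_le
      _ ≤ 4 * ε ^ 2 := by
          rw [← Finset.mul_sum, Finset.sum_add_distrib]
          linarith
  have hdenom : 0 < 1 - mutualCoherenceU Q * (2 * (K : ℝ) - 1) := by
    linarith [mul_nonneg (mutualCoherenceU_nonneg Q) (Nat.cast_nonneg K : (0 : ℝ) ≤ K)]
  rw [le_div_iff₀' hdenom]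
  push_cast at hlower
  exact hlower.trans hupper

theorem sparse_stability {d k K : ℕ} (Q : Matrix (Fin d) (Fin k) ℝ)
    (hunit : ∀ j, ‖matCol Q j‖ = 1)
    (sStar sPlus : Fin k → ℝ) (θhat : Fin d → ℝ) (ε : ℝ) (hε : 0 ≤ ε)
    (hKcond : (4 * (K : ℝ) - 1) * mutualCoherenceU Q < 1)
    (hsStar : l0norm sStar ≤ K) (hsPlus : l0norm sPlus ≤ K)
    (hfit1 : ∑ i, (θhat i - Q.mulVec sStar i) ^ 2 ≤ ε ^ 2)
    (hfit2 : ∑ i, (θhat i - Q.mulVec sPlus i) ^ 2 ≤ ε ^ 2) :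
    ∑ j, (sStar j - sPlus j) ^ 2 ≤
      4 * ε ^ 2 / (1 - mutualCoherenceU Q * (2 * (K : ℝ) - 1)) :=
  sparse_stability_general Q hunit sStar sPlus θhat ε hKcond hsStar hsPlus hfit1 hfit2
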